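/- arXiv:1101.1587 — 4 statements merged into one kernel-verified Lean document; each statement's English description precedes it below -/
import Mathlib

section
/- Let f : [0,1] → ℝ be continuous. For N ≥ 1 let σ_N(f)_∞ denote the error of best approximation of f in the uniform norm by functions that are constant on each interval [k/N,(k+1)/N], k = 0,…,N−1, i.e. σ_N(f)_∞ = max_{0≤k<N} inf_{c∈ℝ} sup_{x∈[k/N,(k+1)/N]} |f(x) − c|. Then f is Lipschitz on [0,1] if and only if there exists a constant C > 0 such that σ_N(f)_∞ ≤ C N^{−1} for all N ≥ 1. Quantitatively: if f is Lipschitz with constant L then σ_N(f)_∞ ≤ (L/2) N^{−1} for all N, and conversely if σ_N(f)_∞ ≤ C N^{−1} for all N ≥ 1 then |f(x) − f(y)| ≤ 8C|x−y| for all x,y ∈ [0,1]. -/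
open Set

/-- Local piecewise-constant approximation error of `f` on the interval `I`
in the uniform norm: `e_{1,I}(f)_∞ = inf_c sup_{x ∈ I} |f x - c|`. -/
noncomputable def locErr (f : ℝ → ℝ) (I : Set ℝ) : ℝ :=
  ⨅ c : ℝ, ⨆ x : I, |f x.1 - c|

/-- Error of best uniform approximation of `f` by functions constant on each
interval `[k/N, (k+1)/N]`, `k = 0, …, N-1`. -/
noncomputable def unifErr (f : ℝ → ℝ) (N : ℕ) : ℝ :=
  ⨆ k : Fin N, locErr f (Set.Icc ((k : ℝ) / N) (((k : ℝ) + 1) / N))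

lemma supAbs_nonneg (f : ℝ → ℝ) (I : Set ℝ) (c : ℝ) :
    0 ≤ ⨆ x : I, |f x.1 - c| :=
  Real.iSup_nonneg fun _ => abs_nonneg _

lemma locErr_le {f : ℝ → ℝ} {I : Set ℝ} {c B : ℝ} (hne : I.Nonempty)
    (h : ∀ x ∈ I, |f x - c| ≤ B) : locErr f I ≤ B := by
  have : Nonempty I := hne.to_subtype
  refine ciInf_le_of_le ⟨0, ?_⟩ c (ciSup_le fun x => h x x.2)
  rintro y ⟨c', rfl⟩
  exact supAbs_nonneg f I c'

lemma abs_sub_le_two_locErr {f : ℝ → ℝ} {I : Set ℝ} {M : ℝ}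
    (hM : ∀ x ∈ I, |f x| ≤ M) {u v : ℝ} (hu : u ∈ I) (hv : v ∈ I) :
    |f u - f v| ≤ 2 * locErr f I := by
  have : Nonempty I := ⟨⟨u, hu⟩⟩
  have key : ∀ c : ℝ, |f u - f v| / 2 ≤ ⨆ x : I, |f x.1 - c| := by
    intro c
    have hbdd : BddAbove (Set.range fun x : I => |f x.1 - c|) := by
      refine ⟨M + |c|, ?_⟩
      rintro y ⟨x, rfl⟩
      calc |f x.1 - c| ≤ |f x.1| + |c| := abs_sub _ _
        _ ≤ M + |c| := by linarith [hM x.1 x.2]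
    have h1 : |f u - c| ≤ ⨆ x : I, |f x.1 - c| := le_ciSup hbdd ⟨u, hu⟩
    have h2 : |f v - c| ≤ ⨆ x : I, |f x.1 - c| := le_ciSup hbdd ⟨v, hv⟩
    have h3 : |f u - f v| ≤ |f u - c| + |c - f v| := abs_sub_le _ _ _
    rw [abs_sub_comm c (f v)] at h3
    linarith
  have := le_ciInf key
  unfold locErr
  linarith

lemma locErr_le_unifErr (f : ℝ → ℝ) (N : ℕ) (k : Fin N) :
    locErr f (Set.Icc ((k : ℝ) / N) (((k : ℝ) + 1) / N)) ≤ unifErr f N := by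
  exact le_ciSup (f := fun k : Fin N =>
    locErr f (Set.Icc ((k : ℝ) / N) (((k : ℝ) + 1) / N)))
    (Set.Finite.bddAbove (Set.finite_range _)) k

lemma interval_subset (N k : ℕ) (hk : k < N) :
    Set.Icc ((k : ℝ) / N) (((k : ℝ) + 1) / N) ⊆ Set.Icc (0:ℝ) 1 := by
  have hN : (0:ℝ) < N := by exact_mod_cast Nat.pos_of_ne_zero (by omega)
  apply Set.Icc_subset_Icc
  · positivity
  · rw [div_le_one hN]
    exact_mod_cast Nat.succ_le_of_lt hk

/-- oscillation on one subinterval, given bound on unifErr -/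
lemma osc_interval {f : ℝ → ℝ} {M : ℝ} (hM : ∀ x ∈ Set.Icc (0:ℝ) 1, |f x| ≤ M)
    {C : ℝ} {N : ℕ} (hN : 1 ≤ N) (hb : unifErr f N ≤ C / N) {k : ℕ} (hk : k < N)
    {u v : ℝ} (hu : u ∈ Set.Icc ((k : ℝ) / N) (((k : ℝ) + 1) / N))
    (hv : v ∈ Set.Icc ((k : ℝ) / N) (((k : ℝ) + 1) / N)) :
    |f u - f v| ≤ 2 * (C / N) := by
  have hsub := interval_subset N k hk
  have h1 : |f u - f v| ≤ 2 * locErr f (Set.Icc ((k : ℝ) / N) (((k : ℝ) + 1) / N)) :=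
    abs_sub_le_two_locErr (fun x hx => hM x (hsub hx)) hu hv
  have h2 := locErr_le_unifErr f N ⟨k, hk⟩
  simp only at h2
  linarith

lemma osc_near {f : ℝ → ℝ} {M : ℝ} (hM : ∀ x ∈ Set.Icc (0:ℝ) 1, |f x| ≤ M)
    {C : ℝ} (hC : 0 < C) {N : ℕ} (hN : 1 ≤ N) (hb : unifErr f N ≤ C / N)
    {u v : ℝ} (hu : u ∈ Set.Icc (0:ℝ) 1) (hv : v ∈ Set.Icc (0:ℝ) 1)
    (huv : u ≤ v) (hclose : v - u ≤ 1 / N) :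
    |f u - f v| ≤ 4 * (C / N) := by
  have hNpos : (0:ℝ) < N := by exact_mod_cast hN
  set j : ℕ := ⌊(N : ℝ) * u⌋₊ with hj
  have hjle : (j : ℝ) ≤ (N : ℝ) * u := Nat.floor_le (by nlinarith [hu.1])
  have hjlt : (N : ℝ) * u < (j : ℝ) + 1 := Nat.lt_floor_add_one _
  by_cases hjN : j < N
  · by_cases hcase : v ≤ ((j : ℝ) + 1) / N
    · have h := osc_interval hM hN hb hjN (u := u) (v := v)
        ⟨by rw [div_le_iff₀ hNpos]; nlinarith, by rw [le_div_iff₀ hNpos]; nlinarith⟩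
        ⟨by rw [div_le_iff₀ hNpos]; nlinarith, hcase⟩
      linarith [div_pos hC hNpos]
    · push_neg at hcase
      have hj1N : j + 1 < N := by
        have h' : ((j : ℝ) + 1) / N < 1 := lt_of_lt_of_le hcase hv.2
        rw [div_lt_one hNpos] at h'
        exact_mod_cast h'
      have h1 := osc_interval hM hN hb hjN (u := u) (v := ((j : ℝ) + 1) / N)
        ⟨by rw [div_le_iff₀ hNpos]; nlinarith, by rw [le_div_iff₀ hNpos]; nlinarith⟩
        ⟨by gcongr; linarith, le_refl _⟩
      have h2 := osc_interval hM hN hb hj1N (u := ((j : ℝ) + 1) / N) (v := v)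
        ⟨by push_cast; exact le_refl _,
         by push_cast; gcongr <;> linarith⟩
        ⟨by push_cast; exact le_of_lt hcase,
         by push_cast
            rw [le_div_iff₀ hNpos]
            have hinv : (1 / (N:ℝ)) * N = 1 := by field_simp
            nlinarith [mul_le_mul_of_nonneg_right hclose (le_of_lt hNpos)]⟩
      calc |f u - f v| ≤ |f u - f (((j : ℝ) + 1) / N)| + |f (((j : ℝ) + 1) / N) - f v| := by
            have := abs_sub_le (f u) (f (((j : ℝ) + 1) / N)) (f v); linarith
        _ ≤ 2 * (C / N) + 2 * (C / N) := add_le_add h1 h2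
        _ = 4 * (C / N) := by ring
  · push_neg at hjN
    have h1 : (1:ℝ) ≤ u := by
      have h2 : (N:ℝ) ≤ j := by exact_mod_cast hjN
      nlinarith [hu.2]
    have huv1 : u = 1 := le_antisymm hu.2 h1
    have hv1 : v = 1 := le_antisymm hv.2 (huv1 ▸ huv)
    rw [huv1, hv1, sub_self, abs_zero]
    positivity

lemma partB {f : ℝ → ℝ} {L : ℝ} (hL : 0 ≤ L)
    (h : ∀ x ∈ Set.Icc (0:ℝ) 1, ∀ y ∈ Set.Icc (0:ℝ) 1, |f x - f y| ≤ L * |x - y|)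
    {N : ℕ} (hN : 1 ≤ N) : unifErr f N ≤ (L / 2) / N := by
  have hNpos : (0:ℝ) < N := by exact_mod_cast hN
  have : Nonempty (Fin N) := ⟨⟨0, hN⟩⟩
  apply ciSup_le
  intro k
  have hNne : (N:ℝ) ≠ 0 := hNpos.ne'
  set m : ℝ := ((k : ℝ) + 1/2) / N with hm
  have e1 : m - 1/(2*N) = (k : ℝ)/N := by
    rw [hm, div_sub_div _ _ hNne (by positivity : 2*(N:ℝ) ≠ 0),
      div_eq_div_iff (by positivity) hNne]
    ring
  have e2 : m + 1/(2*N) = ((k : ℝ)+1)/N := by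
    rw [hm, div_add_div _ _ hNne (by positivity : 2*(N:ℝ) ≠ 0),
      div_eq_div_iff (by positivity) hNne]
    ring
  have hmI : m ∈ Set.Icc ((k:ℝ)/N) (((k:ℝ)+1)/N) := by
    constructor
    · rw [← e1]; have : 0 < 1/(2*(N:ℝ)) := by positivity
      linarith
    · rw [← e2]; have : 0 < 1/(2*(N:ℝ)) := by positivity
      linarith
  have hsub := interval_subset N k k.isLt
  apply locErr_le ⟨m, hmI⟩ (c := f m)
  intro x hx
  have habs : |x - m| ≤ 1/(2*N) := by
    rw [abs_le]
    constructor <;> [linarith [hx.1, e1]; linarith [hx.2, e2]]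
  calc |f x - f m| ≤ L * |x - m| := h x (hsub hx) m (hsub hmI)
    _ ≤ L * (1/(2*N)) := mul_le_mul_of_nonneg_left habs hL
    _ = (L/2)/N := by rw [div_div, mul_one_div]

theorem stmt0 (f : ℝ → ℝ) (hf : ContinuousOn f (Set.Icc 0 1)) :
    ((∃ L : NNReal, LipschitzOnWith L f (Set.Icc 0 1)) ↔
      ∃ C > (0:ℝ), ∀ N : ℕ, 1 ≤ N → unifErr f N ≤ C / N) ∧
    (∀ L : ℝ, 0 ≤ L →
      (∀ x ∈ Set.Icc (0:ℝ) 1, ∀ y ∈ Set.Icc (0:ℝ) 1, |f x - f y| ≤ L * |x - y|) →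
      ∀ N : ℕ, 1 ≤ N → unifErr f N ≤ (L / 2) / N) ∧
    (∀ C : ℝ, 0 < C → (∀ N : ℕ, 1 ≤ N → unifErr f N ≤ C / N) →
      ∀ x ∈ Set.Icc (0:ℝ) 1, ∀ y ∈ Set.Icc (0:ℝ) 1, |f x - f y| ≤ 8 * C * |x - y|) := by
  obtain ⟨M, hM⟩ := isCompact_Icc.exists_bound_of_continuousOn hf
  have hM' : ∀ x ∈ Set.Icc (0:ℝ) 1, |f x| ≤ M := fun x hx => by
    simpa [Real.norm_eq_abs] using hM x hx
  have partC : ∀ C : ℝ, 0 < C → (∀ N : ℕ, 1 ≤ N → unifErr f N ≤ C / N) →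
      ∀ x ∈ Set.Icc (0:ℝ) 1, ∀ y ∈ Set.Icc (0:ℝ) 1, |f x - f y| ≤ 8 * C * |x - y| := by
    intro C hC hb
    have key : ∀ x ∈ Set.Icc (0:ℝ) 1, ∀ y ∈ Set.Icc (0:ℝ) 1, x < y →
        |f x - f y| ≤ 8 * C * |x - y| := by
      intro x hx y hy hlt
      have hxy : x ≤ y := hlt.le
      have hpos : 0 < y - x := by linarith
      have hle1 : y - x ≤ 1 := by
        have := hx.1; have := hy.2; linarith
      have ht1 : (1:ℝ) ≤ 1/(y - x) := by
        rw [le_div_iff₀ hpos]; linarith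
      set N : ℕ := ⌊1/(y-x)⌋₊ with hNdef
      have hN1 : 1 ≤ N := Nat.le_floor (by exact_mod_cast ht1)
      have hNpos : (0:ℝ) < N := by exact_mod_cast hN1
      have hNle : (N:ℝ) ≤ 1/(y-x) := Nat.floor_le (by positivity)
      have hclose : y - x ≤ 1/N := by
        rw [le_div_iff₀ hNpos]
        rw [le_div_iff₀ hpos] at hNle
        linarith
      have hosc := osc_near hM' hC hN1 (hb N hN1) hx hy hxy hclose
      have hfloor : 1/(y-x) - 1 < (N:ℝ) := Nat.sub_one_lt_floor _
      have hN1' : (1:ℝ) ≤ N := by exact_mod_cast hN1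
      have heq : 1/(2*(y-x)) = (1/(y-x))/2 := by
        rw [div_div, mul_comm]
      have hNge : 1/(2*(y-x)) ≤ (N:ℝ) := by
        rcases le_or_gt (1/(y-x)) 2 with h2 | h2
        · rw [heq]; linarith
        · rw [heq]; linarith
      have hinv : 1/(N:ℝ) ≤ 2*(y-x) := by
        have h0 : (0:ℝ) < 1/(2*(y-x)) := by positivity
        calc 1/(N:ℝ) ≤ 1/(1/(2*(y-x))) := one_div_le_one_div_of_le h0 hNge
          _ = 2*(y-x) := by field_simp
      have habs : |x - y| = y - x := by rw [abs_sub_comm]; exact abs_of_pos hpos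
      rw [habs]
      have : 4 * (C/N) ≤ 8 * C * (y - x) := by
        have : C/(N:ℝ) = C * (1/N) := by ring
        rw [this]
        nlinarith [hinv, hC.le]
      linarith
    intro x hx y hy
    rcases lt_trichotomy x y with h | h | h
    · exact key x hx y hy h
    · simp [h]
    · rw [abs_sub_comm (f x), abs_sub_comm x]
      exact key y hy x hx h
  refine ⟨⟨?_, ?_⟩, ?_, partC⟩
  · rintro ⟨L, hL⟩
    refine ⟨(L:ℝ)/2 + 1, by positivity, fun N hN => ?_⟩
    have hNpos : (0:ℝ) < N := by exact_mod_cast hN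
    have hpw : ∀ x ∈ Set.Icc (0:ℝ) 1, ∀ y ∈ Set.Icc (0:ℝ) 1, |f x - f y| ≤ (L:ℝ) * |x - y| := by
      intro x hx y hy
      have := hL.dist_le_mul x hx y hy
      simpa [Real.dist_eq] using this
    have := partB (L := (L:ℝ)) L.coe_nonneg hpw hN
    calc unifErr f N ≤ ((L:ℝ)/2)/N := this
      _ ≤ ((L:ℝ)/2 + 1)/N := by gcongr; linarith
  · rintro ⟨C, hC, hb⟩
    refine ⟨(8*C).toNNReal, LipschitzOnWith.of_dist_le_mul fun x hx y hy => ?_⟩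
    have := partC C hC hb x hx y hy
    rw [Real.dist_eq, Real.dist_eq, Real.coe_toNNReal _ (by positivity)]
    exact this
  · intro L hL h N hN
    exact partB hL h hN
end

section
/- Let f : [0,1] → ℝ be absolutely continuous with derivative f' ∈ L¹([0,1]). Then for every N ≥ 1 there exists a partition of [0,1] into N intervals I_1,…,I_N (with pairwise disjoint interiors and union [0,1]) such that the piecewise-constant approximation error in the uniform norm satisfies max_{1≤k≤N} inf_{c∈ℝ} sup_{x∈I_k} |f(x) − c| ≤ (1/(2N)) ∫_0^1 |f'(t)| dt. The partition can be chosen so that ∫_{I_k} |f'(t)| dt = N^{−1} ∫_0^1 |f'(t)| dt for every k (equidistribution of the L¹ norm of f'). -/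
open Set MeasureTheory

/-- If `f` is absolutely continuous on `[0,1]` with derivative `g ∈ L¹`, then for each
`N ≥ 1` there is a partition `0 = a 0 ≤ a 1 ≤ … ≤ a N = 1` of `[0,1]` into `N` intervals
which equidistributes the `L¹` norm of `g` and whose uniform-norm piecewise-constant
error is at most `(1/(2N)) ∫₀¹ |g|`. -/
theorem stmt3 (f g : ℝ → ℝ) (hg : IntegrableOn g (Set.Icc 0 1))
    (hf : ∀ x ∈ Set.Icc (0:ℝ) 1, f x = f 0 + ∫ t in (0:ℝ)..x, g t) :
    ∀ N : ℕ, 1 ≤ N → ∃ a : ℕ → ℝ,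
      a 0 = 0 ∧ a N = 1 ∧ (∀ k < N, a k ≤ a (k + 1)) ∧
      (∀ k < N, ∫ t in Set.Icc (a k) (a (k + 1)), |g t| =
        (1 / N) * ∫ t in Set.Icc (0:ℝ) 1, |g t|) ∧
      (∀ k < N, locErr f (Set.Icc (a k) (a (k + 1))) ≤
        (1 / (2 * N)) * ∫ t in Set.Icc (0:ℝ) 1, |g t|) := by
  intro N hN
  have hN0 : (N : ℝ) ≠ 0 := Nat.cast_ne_zero.mpr (by omega)
  set T : ℝ := ∫ t in Set.Icc (0:ℝ) 1, |g t| with hTdef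
  set h : ℝ → ℝ := (Set.Icc (0:ℝ) 1).indicator (fun t => |g t|) with hhdef
  have hgabs : IntegrableOn (fun t => |g t|) (Set.Icc (0:ℝ) 1) := hg.abs
  have hhint : Integrable h := hgabs.integrable_indicator measurableSet_Icc
  have hhnn : ∀ t, 0 ≤ h t := fun t =>
    Set.indicator_nonneg (fun t _ => abs_nonneg _) t
  set G : ℝ → ℝ := fun x => ∫ t in (0:ℝ)..x, h t with hGdef
  have hGcont : Continuous G :=
    intervalIntegral.continuous_primitive (fun a b => hhint.intervalIntegrable) 0
  have hGdiff : ∀ x y : ℝ, G y - G x = ∫ t in x..y, h t := by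
    intro x y
    have := intervalIntegral.integral_add_adjacent_intervals
      (hhint.intervalIntegrable (a := 0) (b := x))
      (hhint.intervalIntegrable (a := x) (b := y))
    simp only [hGdef]
    linarith [this]
  have hGmono : Monotone G := by
    intro x y hxy
    have h1 := hGdiff x y
    have h2 : 0 ≤ ∫ t in x..y, h t :=
      intervalIntegral.integral_nonneg hxy (fun u _ => hhnn u)
    linarith
  -- h integral equals |g| integral on subintervals of [0,1]
  have hint_eq : ∀ x y : ℝ, 0 ≤ x → x ≤ y → y ≤ 1 →
      (∫ t in x..y, h t) = ∫ t in Set.Icc x y, |g t| := by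
    intro x y hx hxy hy
    rw [intervalIntegral.integral_of_le hxy, integral_Icc_eq_integral_Ioc]
    refine setIntegral_congr_fun measurableSet_Ioc (fun t ht => ?_)
    have : t ∈ Set.Icc (0:ℝ) 1 := ⟨le_of_lt (lt_of_le_of_lt hx ht.1), le_trans ht.2 hy⟩
    simp [hhdef, Set.indicator_of_mem this]
  have hG0 : G 0 = 0 := by simp [hGdef]
  have hG1 : G 1 = T := by
    have := hint_eq 0 1 le_rfl zero_le_one le_rfl
    simpa [hGdef, hTdef] using (by simpa [hG0] using this)
  have hT0 : 0 ≤ T := by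
    rw [← hG1, ← hG0]; exact hGmono zero_le_one
  -- interval integrability of g on subintervals of [0,1]
  have hgii : ∀ x ∈ Set.Icc (0:ℝ) 1, ∀ y ∈ Set.Icc (0:ℝ) 1,
      IntervalIntegrable g MeasureTheory.volume x y := by
    intro x hx y hy
    refine (hg.mono_set ?_).intervalIntegrable
    have hx' : x ∈ Set.uIcc (0:ℝ) 1 := by rwa [Set.uIcc_of_le zero_le_one]
    have hy' : y ∈ Set.uIcc (0:ℝ) 1 := by rwa [Set.uIcc_of_le zero_le_one]
    rw [show Set.Icc (0:ℝ) 1 = Set.uIcc 0 1 from (Set.uIcc_of_le zero_le_one).symm]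
    exact Set.uIcc_subset_uIcc hx' hy'
  -- the oscillation bound: for x ≤ y in [0,1], |f y - f x| ≤ G y - G x
  have hosc : ∀ x ∈ Set.Icc (0:ℝ) 1, ∀ y ∈ Set.Icc (0:ℝ) 1, x ≤ y →
      |f y - f x| ≤ G y - G x := by
    intro x hx y hy hxy
    have hfd : f y - f x = ∫ t in x..y, g t := by
      rw [hf x hx, hf y hy]
      have := intervalIntegral.integral_interval_sub_left
        (hgii 0 (Set.left_mem_Icc.mpr zero_le_one) y hy)
        (hgii 0 (Set.left_mem_Icc.mpr zero_le_one) x hx)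
      linarith [this]
    rw [hfd]
    calc |∫ t in x..y, g t| ≤ ∫ t in x..y, |g t| :=
          intervalIntegral.abs_integral_le_integral_abs hxy
      _ = ∫ t in x..y, h t := by
          rw [intervalIntegral.integral_of_le hxy, intervalIntegral.integral_of_le hxy]
          refine setIntegral_congr_fun measurableSet_Ioc (fun t ht => ?_)
          have : t ∈ Set.Icc (0:ℝ) 1 := ⟨le_of_lt (lt_of_le_of_lt hx.1 ht.1), le_trans ht.2 hy.2⟩
          simp [hhdef, Set.indicator_of_mem this]
      _ = G y - G x := (hGdiff x y).symm
  -- continuity of f on [0,1]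
  have hfcont : ContinuousOn f (Set.Icc (0:ℝ) 1) := by
    have hc : ContinuousOn (fun x => f 0 + ∫ t in (0:ℝ)..x, g t) (Set.Icc (0:ℝ) 1) := by
      refine continuousOn_const.add ?_
      have := intervalIntegral.continuousOn_primitive_interval
        (f := g) (μ := MeasureTheory.volume) (a := 0) (b := 1)
        (by rwa [Set.uIcc_of_le zero_le_one])
      rwa [Set.uIcc_of_le zero_le_one] at this
    exact hc.congr hf
  -- the partition points
  set S : ℝ → Set ℝ := fun c => {x ∈ Set.Icc (0:ℝ) 1 | G x = c} with hSdef
  have hSne : ∀ c, 0 ≤ c → c ≤ T → (S c).Nonempty := by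
    intro c hc hcT
    have := intermediate_value_Icc zero_le_one hGcont.continuousOn
    rw [hG0, hG1] at this
    obtain ⟨x, hx, hGx⟩ := this ⟨hc, hcT⟩
    exact ⟨x, hx, hGx⟩
  set a : ℕ → ℝ := fun k => if k = 0 then 0 else if N ≤ k then 1
    else sInf (S (k * T / N)) with hadef
  have hSclosed : ∀ c, IsClosed (S c) :=
    fun c => isClosed_Icc.inter (isClosed_eq hGcont continuous_const)
  have hSmem : ∀ k, 1 ≤ k → k < N → a k ∈ S (k * T / N) := by
    intro k hk1 hkN
    have hne : (S (k * T / N)).Nonempty := by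
      refine hSne _ (div_nonneg (mul_nonneg (Nat.cast_nonneg k) hT0) (Nat.cast_nonneg N)) ?_
      rw [div_le_iff₀ (by positivity)]
      have : (k : ℝ) ≤ N := Nat.cast_le.mpr (le_of_lt hkN)
      nlinarith
    have hbdd : BddBelow (S (k * T / N)) := ⟨0, fun x hx => hx.1.1⟩
    have : a k = sInf (S (k * T / N)) := by
      simp only [hadef]
      rw [if_neg (by omega), if_neg (by omega)]
    rw [this]
    exact (hSclosed _).csInf_mem hne hbdd
  have hak : ∀ k, k ≤ N → a k ∈ Set.Icc (0:ℝ) 1 ∧ G (a k) = k * T / N := by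
    intro k hkN
    rcases Nat.eq_zero_or_pos k with rfl | hk1
    · have ha0 : a 0 = 0 := by simp [hadef]
      rw [ha0]
      exact ⟨Set.left_mem_Icc.mpr zero_le_one, by rw [hG0]; simp⟩
    rcases eq_or_lt_of_le hkN with hkeq | hkN'
    · have haN : a k = 1 := by
        simp only [hadef]
        rw [if_neg (by omega), if_pos (by omega)]
      rw [haN]
      refine ⟨Set.right_mem_Icc.mpr zero_le_one, ?_⟩
      rw [hG1, hkeq]
      field_simp
    · obtain ⟨h1, h2⟩ := hSmem k hk1 hkN'
      exact ⟨h1, h2⟩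
  have hmono : ∀ k < N, a k ≤ a (k + 1) := by
    intro k hk
    rcases Nat.eq_zero_or_pos k with rfl | hk1
    · have := (hak 1 (by omega)).1
      simpa [hadef] using this.1
    rcases Nat.lt_or_ge (k + 1) N with hk2 | hk2
    · by_contra hcon
      push_neg at hcon
      have hGle : G (a (k + 1)) ≤ G (a k) := hGmono (le_of_lt hcon)
      rw [(hak k hk.le).2, (hak (k+1) (by omega)).2] at hGle
      have hTle : T ≤ 0 := by
        push_cast at hGle
        rw [div_le_div_iff₀ (by positivity) (by positivity)] at hGle
        have hNpos : (0:ℝ) < N := lt_of_le_of_ne (Nat.cast_nonneg N) (Ne.symm hN0)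
        nlinarith
      have hT : T = 0 := le_antisymm hTle hT0
      have : a k = a (k + 1) := by
        simp only [hadef, if_neg (by omega : ¬ k = 0), if_neg (by omega : ¬ N ≤ k),
          if_neg (by omega : ¬ k + 1 = 0), if_neg (by omega : ¬ N ≤ k + 1)]
        rw [hT]
        norm_num
      exact absurd this (by linarith)
    · have := (hak k hk.le).1
      have haN : a (k + 1) = 1 := by
        simp only [hadef]
        rw [if_neg (by omega), if_pos (by omega)]
      rw [haN]
      exact this.2
  refine ⟨a, by simp [hadef], ?_, hmono, ?_, ?_⟩
  · simp only [hadef]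
    rw [if_neg (by omega), if_pos le_rfl]
  · -- equidistribution
    intro k hk
    have h1 := hak k hk.le
    have h2 := hak (k + 1) (by omega)
    have key : (∫ t in Set.Icc (a k) (a (k+1)), |g t|) = G (a (k+1)) - G (a k) := by
      rw [hGdiff, hint_eq (a k) (a (k+1)) h1.1.1 (hmono k hk) h2.1.2]
    rw [key, h1.2, h2.2]
    push_cast
    field_simp
    ring
  · -- error bound
    intro k hk
    have h1 := hak k hk.le
    have h2 := hak (k + 1) (by omega)
    have hsub : Set.Icc (a k) (a (k+1)) ⊆ Set.Icc (0:ℝ) 1 :=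
      Set.Icc_subset_Icc h1.1.1 h2.1.2
    have hIne : (Set.Icc (a k) (a (k+1))).Nonempty := ⟨a k, le_rfl, hmono k hk⟩
    have hIcp : IsCompact (Set.Icc (a k) (a (k+1))) := isCompact_Icc
    have hfc : ContinuousOn f (Set.Icc (a k) (a (k+1))) := hfcont.mono hsub
    obtain ⟨p, hp, hpmax⟩ := hIcp.exists_isMaxOn hIne hfc
    obtain ⟨q, hq, hqmin⟩ := hIcp.exists_isMinOn hIne hfc
    -- osc bound on the subinterval
    have hGbd : G (a (k+1)) - G (a k) = T / N := by
      rw [h1.2, h2.2]; push_cast; ring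
    have hoscI : ∀ x ∈ Set.Icc (a k) (a (k+1)), ∀ y ∈ Set.Icc (a k) (a (k+1)),
        |f y - f x| ≤ T / N := by
      intro x hx y hy
      rcases le_total x y with hxy | hxy
      · have := hosc x (hsub hx) y (hsub hy) hxy
        have hle : G y - G x ≤ G (a (k+1)) - G (a k) :=
          sub_le_sub (hGmono hy.2) (hGmono hx.1)
        rw [hGbd] at hle
        linarith
      · have := hosc y (hsub hy) x (hsub hx) hxy
        have hle : G x - G y ≤ G (a (k+1)) - G (a k) :=
          sub_le_sub (hGmono hx.2) (hGmono hy.1)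
        rw [hGbd] at hle
        rw [abs_sub_comm]
        linarith
    have hpq : f p - f q ≤ T / N := by
      have := hoscI q hq p hp
      calc f p - f q ≤ |f p - f q| := le_abs_self _
        _ ≤ T / N := this
    -- bound locErr with c = (f p + f q)/2
    set c₀ : ℝ := (f p + f q) / 2 with hc0
    have hbound : ∀ x : (Set.Icc (a k) (a (k+1)) : Set ℝ), |f x.1 - c₀| ≤ T / (2 * N) := by
      rintro ⟨x, hx⟩
      have h3 : f x ≤ f p := hpmax hx
      have h4 : f q ≤ f x := hqmin hx
      have h5 : T / (2 * N) = (T / N) / 2 := by ring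
      rw [abs_le, h5]
      constructor <;> simp only [hc0] <;> linarith
    have : Nonempty (Set.Icc (a k) (a (k+1)) : Set ℝ) := ⟨⟨a k, le_rfl, hmono k hk⟩⟩
    have hsup : (⨆ x : (Set.Icc (a k) (a (k+1)) : Set ℝ), |f x.1 - c₀|) ≤ T / (2 * N) :=
      ciSup_le hbound
    have hbb : BddBelow (Set.range fun c : ℝ =>
        ⨆ x : (Set.Icc (a k) (a (k+1)) : Set ℝ), |f x.1 - c|) := by
      refine ⟨0, ?_⟩
      rintro v ⟨c, rfl⟩
      exact Real.iSup_nonneg (fun x => abs_nonneg _)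
    calc locErr f (Set.Icc (a k) (a (k+1)))
        ≤ ⨆ x : (Set.Icc (a k) (a (k+1)) : Set ℝ), |f x.1 - c₀| := ciInf_le hbb c₀
      _ ≤ T / (2 * N) := hsup
      _ = (1 / (2 * N)) * T := by ring
end

section
/- Let f : [0,1] → ℝ be continuous. For N ≥ 1 let σ_N(f)_∞ := inf over all partitions of [0,1] into at most N intervals of the global uniform-norm piecewise-constant approximation error. Then f has bounded variation on [0,1] if and only if there exists C > 0 such that σ_N(f)_∞ ≤ C N^{−1} for all N ≥ 1. Quantitatively: if f ∈ BV([0,1]) then σ_N(f)_∞ ≤ (1/2)|f|_{BV} N^{−1}, and conversely if σ_N(f)_∞ ≤ C N^{−1} for all N ≥ 1 then the total variation of f is at most 6C. -/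
open Set

/-- `σ_N(f)_∞`: infimum, over all partitions of `[0,1]` into at most `N` intervals
(given by points `0 = a 0 ≤ a 1 ≤ … ≤ a M = 1`, `M ≤ N`), of the global
uniform-norm piecewise-constant approximation error (the max of local errors). -/
noncomputable def adaptErr (f : ℝ → ℝ) (N : ℕ) : ℝ :=
  sInf { e : ℝ | ∃ M : ℕ, 1 ≤ M ∧ M ≤ N ∧ ∃ a : ℕ → ℝ,
    a 0 = 0 ∧ a M = 1 ∧ (∀ k < M, a k ≤ a (k + 1)) ∧
    e = ⨆ k : Fin M, locErr f (Set.Icc (a k.1) (a (k.1 + 1))) }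

/-!
For the direct estimate, the variation `t ↦ V(f, [0, t])` is monotone, so `[0, 1]` can be cut into
`N` intervals on whose interiors it increases by at most `V(f, [0, 1]) / N`. Hence `f` oscillates by
at most `V(f, [0, 1]) / N` on each interior and, by continuity, on each closed interval, and the
midrange constant approximates it within half of that.

For the inverse estimate, take a partition into `M ≤ N` pieces with local errors below `B`. Along an
increasing sequence `u₀ ≤ ⋯ ≤ uₙ`, the increment `|f u_{i+1} - f u_i|` is at most `2B` times one
plus the number of partition points crossed, so the variation sum is at most `2B (n + M)`. With `B`
just above `C / N` this is about `2C (n / N + 1)`, and `N → ∞` bounds the variation by `2C`.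
-/

open Set Filter Topology

lemma locErr_nonneg (f : ℝ → ℝ) (I : Set ℝ) : 0 ≤ locErr f I :=
  Real.iInf_nonneg fun _ => Real.iSup_nonneg fun _ => abs_nonneg _

lemma locErr_le_half {f : ℝ → ℝ} {I : Set ℝ} {δ : ℝ} (hI : I.Nonempty)
    (h : ∀ x ∈ I, ∀ y ∈ I, f y - f x ≤ δ) : locErr f I ≤ δ / 2 := by
  obtain ⟨x₀, hx₀⟩ := hI
  have hne : (f '' I).Nonempty := ⟨f x₀, mem_image_of_mem f hx₀⟩
  have hδ : 0 ≤ δ := by simpa using h x₀ hx₀ x₀ hx₀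
  have hbddAbove : BddAbove (f '' I) :=
    ⟨f x₀ + δ, by rintro _ ⟨y, hy, rfl⟩; linarith [h x₀ hx₀ y hy]⟩
  have hbddBelow : BddBelow (f '' I) :=
    ⟨f x₀ - δ, by rintro _ ⟨y, hy, rfl⟩; linarith [h y hy x₀ hx₀]⟩
  have hsup_le : sSup (f '' I) ≤ sInf (f '' I) + δ := by
    refine csSup_le hne ?_
    rintro _ ⟨y, hy, rfl⟩
    have : f y - δ ≤ sInf (f '' I) := by
      refine le_csInf hne ?_
      rintro _ ⟨x, hx, rfl⟩
      linarith [h x hx y hy]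
    linarith
  refine ciInf_le_of_le ⟨0, ?_⟩ ((sSup (f '' I) + sInf (f '' I)) / 2)
    (Real.iSup_le ?_ (by linarith))
  · rintro _ ⟨c, rfl⟩
    exact Real.iSup_nonneg fun _ => abs_nonneg _
  · rintro ⟨x, hx⟩
    have hle : f x ≤ sSup (f '' I) := le_csSup hbddAbove (mem_image_of_mem f hx)
    have hge : sInf (f '' I) ≤ f x := csInf_le hbddBelow (mem_image_of_mem f hx)
    rw [abs_le]
    constructor <;> linarith

lemma abs_sub_le_of_locErr_lt {f : ℝ → ℝ} {I : Set ℝ} {B : ℝ}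
    (hb : Bornology.IsBounded (f '' I)) (h : locErr f I < B) :
    ∀ x ∈ I, ∀ y ∈ I, |f y - f x| ≤ 2 * B := by
  obtain ⟨c, hc⟩ := exists_lt_of_ciInf_lt h
  obtain ⟨D, hD⟩ := hb.exists_norm_le
  have hbdd : BddAbove (range fun x : I => |f x - c|) := by
    refine ⟨D + |c|, ?_⟩
    rintro _ ⟨x, rfl⟩
    exact (abs_sub _ _).trans (by linarith [hD _ (mem_image_of_mem f x.2), Real.norm_eq_abs (f x)])
  have hfc : ∀ x ∈ I, |f x - c| ≤ B := fun x hx => (le_ciSup hbdd ⟨x, hx⟩).trans hc.le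
  intro x hx y hy
  calc |f y - f x| ≤ |f y - c| + |c - f x| := abs_sub_le _ _ _
    _ ≤ B + B := add_le_add (hfc y hy) (by rw [abs_sub_comm]; exact hfc x hx)
    _ = 2 * B := by ring

lemma adaptErr_nonneg (f : ℝ → ℝ) (N : ℕ) : 0 ≤ adaptErr f N := by
  refine Real.sInf_nonneg ?_
  rintro _ ⟨_, -, -, _, -, -, -, rfl⟩
  exact Real.iSup_nonneg fun _ => locErr_nonneg _ _

lemma adaptErr_le_of_partition {f : ℝ → ℝ} {N M : ℕ} {a : ℕ → ℝ} {e : ℝ} (hM : 1 ≤ M)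
    (hMN : M ≤ N) (ha0 : a 0 = 0) (haM : a M = 1) (ha : ∀ k < M, a k ≤ a (k + 1))
    (he : ∀ k < M, locErr f (Icc (a k) (a (k + 1))) ≤ e) : adaptErr f N ≤ e := by
  have : Nonempty (Fin M) := ⟨⟨0, hM⟩⟩
  unfold adaptErr
  refine csInf_le_of_le (b := ⨆ k : Fin M, locErr f (Icc (a k) (a (k + 1)))) ⟨0, ?_⟩
    ⟨M, hM, hMN, a, ha0, haM, ha, rfl⟩ (ciSup_le fun k => he k k.2)
  rintro _ ⟨_, -, -, _, -, -, -, rfl⟩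
  exact Real.iSup_nonneg fun _ => locErr_nonneg _ _

lemma exists_partition_of_adaptErr_lt {f : ℝ → ℝ} {N : ℕ} {B : ℝ} (hN : 1 ≤ N)
    (h : adaptErr f N < B) :
    ∃ M, 1 ≤ M ∧ M ≤ N ∧ ∃ a : ℕ → ℝ, a 0 = 0 ∧ a M = 1 ∧ (∀ k < M, a k ≤ a (k + 1)) ∧
      ∀ k < M, locErr f (Icc (a k) (a (k + 1))) < B := by
  have hne : { e : ℝ | ∃ M : ℕ, 1 ≤ M ∧ M ≤ N ∧ ∃ a : ℕ → ℝ,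
      a 0 = 0 ∧ a M = 1 ∧ (∀ k < M, a k ≤ a (k + 1)) ∧
      e = ⨆ k : Fin M, locErr f (Icc (a k.1) (a (k.1 + 1))) }.Nonempty :=
    ⟨_, 1, le_rfl, hN, Nat.cast, Nat.cast_zero, Nat.cast_one, fun k _ => by simp, rfl⟩
  obtain ⟨_, ⟨M, hM, hMN, a, ha0, haM, ha, rfl⟩, hlt⟩ := exists_lt_of_csInf_lt hne h
  exact ⟨M, hM, hMN, a, ha0, haM, ha, fun k hk =>
    (le_ciSup (Set.finite_range _).bddAbove (⟨k, hk⟩ : Fin M)).trans_lt hlt⟩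

lemma Icc_subset_Icc_of_le_succ {a : ℕ → ℝ} {M k : ℕ} (ha : ∀ k < M, a k ≤ a (k + 1))
    (hk : k < M) : Icc (a k) (a (k + 1)) ⊆ Icc (a 0) (a M) := by
  have hmono : ∀ {i j : ℕ}, i ≤ j → j ≤ M → a i ≤ a j := by
    intro i j hij hjM
    induction j, hij using Nat.le_induction with
    | base => exact le_rfl
    | succ j _ ih => exact (ih (by omega)).trans (ha j (by omega))
  exact Icc_subset_Icc (hmono (Nat.zero_le k) hk.le) (hmono hk le_rfl)

lemma MonotoneOn.le_of_csInf_lt {φ : ℝ → ℝ} {p q c s : ℝ} (hφ : MonotoneOn φ (Icc p q))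
    (hne : {t ∈ Icc p q | c ≤ φ t}.Nonempty) (hs : sInf {t ∈ Icc p q | c ≤ φ t} < s)
    (hsq : s ≤ q) : c ≤ φ s := by
  obtain ⟨r, ⟨hrI, hr⟩, hrs⟩ := exists_lt_of_csInf_lt hne hs
  exact hr.trans (hφ hrI ⟨hrI.1.trans hrs.le, hsq⟩ hrs.le)

lemma lt_of_lt_csInf_setOf_le {φ : ℝ → ℝ} {p q c t : ℝ} (ht : t ∈ Icc p q)
    (hts : t < sInf {t ∈ Icc p q | c ≤ φ t}) : φ t < c :=
  not_le.1 fun hle =>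
    (csInf_le (s := {t ∈ Icc p q | c ≤ φ t}) ⟨p, fun _ h => h.1.1⟩ ⟨ht, hle⟩).not_gt hts

lemma MonotoneOn.exists_partition_sub_le {φ : ℝ → ℝ} {p q : ℝ} (hpq : p ≤ q)
    (hφ : MonotoneOn φ (Icc p q)) {N : ℕ} (hN : 1 ≤ N) :
    ∃ a : ℕ → ℝ, a 0 = p ∧ a N = q ∧ (∀ k < N, a k ≤ a (k + 1)) ∧
      ∀ k < N, ∀ s ∈ Ioo (a k) (a (k + 1)), ∀ t ∈ Ioo (a k) (a (k + 1)),
        φ t - φ s ≤ (φ q - φ p) / N := by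
  set h := (φ q - φ p) / N
  have hNpos : (0 : ℝ) < N := by exact_mod_cast hN
  have hNh : (N : ℝ) * h = φ q - φ p := mul_div_cancel₀ _ hNpos.ne'
  have hh : 0 ≤ h := div_nonneg (sub_nonneg.2 (hφ ⟨le_rfl, hpq⟩ ⟨hpq, le_rfl⟩ hpq)) hNpos.le
  -- `a k` is where `φ` first reaches the level `φ p + k h`, except that `a N := q`, since `φ` may
  -- reach its top level before `q`
  set S : ℕ → Set ℝ := fun k => {t ∈ Icc p q | φ p + k * h ≤ φ t}
  set a : ℕ → ℝ := fun k => if k < N then sInf (S k) else q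
  have hbdd : ∀ k, BddBelow (S k) := fun k => ⟨p, fun t ht => ht.1.1⟩
  have hq : ∀ k ≤ N, q ∈ S k := fun k hk => ⟨⟨hpq, le_rfl⟩, by
    have : (k : ℝ) * h ≤ N * h := mul_le_mul_of_nonneg_right (by exact_mod_cast hk) hh
    linarith⟩
  have ha_mem : ∀ k ≤ N, a k ∈ Icc p q := by
    intro k hk
    by_cases hkN : k < N
    · simp only [a, if_pos hkN]
      exact ⟨le_csInf ⟨q, hq k hk⟩ fun t ht => ht.1.1, csInf_le (hbdd k) (hq k hk)⟩
    · simp only [a, if_neg hkN]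
      exact ⟨hpq, le_rfl⟩
  have ha0 : a 0 = p := by
    refine le_antisymm ?_ (ha_mem 0 (Nat.zero_le N)).1
    simp only [a, if_pos (show 0 < N by omega)]
    exact csInf_le (hbdd 0) ⟨⟨le_rfl, hpq⟩, by simp⟩
  have hmono : ∀ k < N, a k ≤ a (k + 1) := by
    intro k hk
    by_cases hk1 : k + 1 < N
    · simp only [a, if_pos hk, if_pos hk1]
      exact csInf_le_csInf (hbdd k) ⟨q, hq _ hk1.le⟩ fun t ⟨htI, ht⟩ =>
        ⟨htI, by push_cast at ht; nlinarith⟩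
    · simpa only [a, if_neg hk1] using (ha_mem k hk.le).2
  refine ⟨a, ha0, if_neg (lt_irrefl N), hmono, fun k hk s hs t ht => ?_⟩
  have hlow : φ p + k * h ≤ φ s := by
    have hs' := hs.1
    simp only [a, if_pos hk] at hs'
    exact hφ.le_of_csInf_lt ⟨q, hq k hk.le⟩ hs' (hs.2.le.trans (ha_mem _ hk).2)
  have hhigh : φ t ≤ φ p + (k + 1 : ℕ) * h := by
    have htI : t ∈ Icc p q := ⟨(ha_mem k hk.le).1.trans ht.1.le, ht.2.le.trans (ha_mem _ hk).2⟩
    by_cases hk1 : k + 1 < N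
    · have ht' := ht.2
      simp only [a, if_pos hk1] at ht'
      exact (lt_of_lt_csInf_setOf_le htI ht').le
    · rw [show k + 1 = N by omega, hNh, add_sub_cancel]
      exact hφ htI ⟨hpq, le_rfl⟩ htI.2
  push_cast at hhigh
  linarith

lemma ContinuousOn.sub_le_of_forall_Ioo {f : ℝ → ℝ} {a b δ : ℝ} (hf : ContinuousOn f (Icc a b))
    (hab : a < b) (h : ∀ x ∈ Ioo a b, ∀ y ∈ Ioo a b, f y - f x ≤ δ) :
    ∀ x ∈ Icc a b, ∀ y ∈ Icc a b, f y - f x ≤ δ := by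
  intro x hx y hy
  have hcl : (x, y) ∈ closure (Ioo a b ×ˢ Ioo a b) := by
    rw [closure_prod_eq, closure_Ioo hab.ne]
    exact ⟨hx, hy⟩
  have hg : ContinuousOn (fun z : ℝ × ℝ => f z.2 - f z.1) (Icc a b ×ˢ Icc a b) :=
    (hf.comp continuousOn_snd fun _ hz => hz.2).sub (hf.comp continuousOn_fst fun _ hz => hz.1)
  exact ContinuousWithinAt.closure_le hcl
    ((hg _ ⟨hx, hy⟩).mono (prod_mono Ioo_subset_Icc_self Ioo_subset_Icc_self))
    continuousWithinAt_const fun z hz => h _ hz.1 _ hz.2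

lemma LocallyBoundedVariationOn.abs_sub_le_abs_variationOnFromTo_sub {f : ℝ → ℝ} {s : Set ℝ}
    (hf : LocallyBoundedVariationOn f s) {a x y : ℝ} (ha : a ∈ s) (hx : x ∈ s) (hy : y ∈ s) :
    |f y - f x| ≤ |variationOnFromTo f s a y - variationOnFromTo f s a x| := by
  rcases le_total x y with hxy | hyx
  · exact (variationOnFromTo.abs_sub_le_sub_of_le hf ha hx hy hxy).trans (le_abs_self _)
  · rw [abs_sub_comm, abs_sub_comm (variationOnFromTo f s a y)]
    exact (variationOnFromTo.abs_sub_le_sub_of_le hf ha hy hx hyx).trans (le_abs_self _)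

lemma adaptErr_le_of_boundedVariationOn {f : ℝ → ℝ} (hf : ContinuousOn f (Icc 0 1))
    (hbv : BoundedVariationOn f (Icc 0 1)) {N : ℕ} (hN : 1 ≤ N) :
    adaptErr f N ≤ ((1 / 2) * (eVariationOn f (Icc 0 1)).toReal) / N := by
  set V := (eVariationOn f (Icc 0 1)).toReal
  have hloc := hbv.locallyBoundedVariationOn
  have h0 : (0 : ℝ) ∈ Icc 0 1 := left_mem_Icc.2 zero_le_one
  have hφ : variationOnFromTo f (Icc 0 1) 0 1 - variationOnFromTo f (Icc 0 1) 0 0 = V := by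
    rw [variationOnFromTo.self, variationOnFromTo.eq_of_le _ _ zero_le_one, Set.inter_self,
      sub_zero]
  obtain ⟨a, ha0, haN, ha, hosc⟩ :=
    (variationOnFromTo.monotoneOn hloc h0).exists_partition_sub_le zero_le_one hN
  rw [hφ] at hosc
  refine adaptErr_le_of_partition hN le_rfl ha0 haN ha fun k hk => ?_
  have hsub : Icc (a k) (a (k + 1)) ⊆ Icc 0 1 := by
    simpa only [ha0, haN] using Icc_subset_Icc_of_le_succ ha hk
  have hI : ∀ x ∈ Icc (a k) (a (k + 1)), ∀ y ∈ Icc (a k) (a (k + 1)), f y - f x ≤ V / N := by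
    rcases (ha k hk).lt_or_eq with hlt | heq
    · refine (hf.mono hsub).sub_le_of_forall_Ioo hlt fun x hx y hy => ?_
      calc f y - f x ≤ |f y - f x| := le_abs_self _
        _ ≤ |variationOnFromTo f (Icc 0 1) 0 y - variationOnFromTo f (Icc 0 1) 0 x| :=
          hloc.abs_sub_le_abs_variationOnFromTo_sub h0 (hsub (Ioo_subset_Icc_self hx))
            (hsub (Ioo_subset_Icc_self hy))
        _ ≤ V / N := abs_sub_le_iff.2 ⟨hosc k hk x hx y hy, hosc k hk y hy x hx⟩
    · intro x hx y hy
      rw [← heq, Icc_self] at hx hy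
      rw [hx, hy, sub_self]
      positivity
  calc locErr f (Icc (a k) (a (k + 1))) ≤ V / N / 2 := locErr_le_half (nonempty_Icc.2 (ha k hk)) hI
    _ = (1 / 2) * V / N := by ring

lemma exists_index_mem_Icc (a : ℕ → ℝ) {M : ℕ} (hM : 1 ≤ M) :
    ∃ g : ℝ → ℕ, Monotone g ∧ (∀ x, g x < M) ∧
      ∀ x ∈ Icc (a 0) (a M), x ∈ Icc (a (g x)) (a (g x + 1)) := by
  refine ⟨fun x => Nat.findGreatest (fun j => a j ≤ x) (M - 1),
    fun x y hxy => Nat.findGreatest_mono_left (fun j hj => hj.trans hxy) _,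
    fun x => (Nat.findGreatest_le (M - 1)).trans_lt (by omega),
    fun x hx => ⟨Nat.findGreatest_spec (P := fun j => a j ≤ x) (Nat.zero_le _) hx.1, ?_⟩⟩
  set j := Nat.findGreatest (fun j => a j ≤ x) (M - 1)
  by_cases hjM : j < M - 1
  · exact (not_le.1 (Nat.findGreatest_is_greatest (P := fun j => a j ≤ x) (k := j + 1)
      (Nat.lt_succ_self j) (by omega))).le
  · have : j + 1 = M := by have := Nat.findGreatest_le (P := fun j => a j ≤ x) (M - 1); omega
    rw [this]
    exact hx.2

lemma abs_sub_le_of_chain {f : ℝ → ℝ} {a : ℕ → ℝ} {M : ℕ} {D : ℝ}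
    (ha : ∀ k < M, a k ≤ a (k + 1))
    (hosc : ∀ k < M, ∀ x ∈ Icc (a k) (a (k + 1)), ∀ y ∈ Icc (a k) (a (k + 1)), |f y - f x| ≤ D)
    {i j : ℕ} (hij : i ≤ j) (hjM : j < M) {x y : ℝ}
    (hx : x ∈ Icc (a i) (a (i + 1))) (hy : y ∈ Icc (a j) (a (j + 1))) :
    |f y - f x| ≤ D * (j - i + 1) := by
  induction j, hij using Nat.le_induction generalizing y with
  | base => simpa using hosc i hjM x hx y hy
  | succ j _ ih =>
    have hj : j < M := by omega
    have h1 := ih hj (right_mem_Icc.2 (ha j hj))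
    have h2 := hosc (j + 1) hjM _ (left_mem_Icc.2 (ha (j + 1) hjM)) y hy
    calc |f y - f x| ≤ |f y - f (a (j + 1))| + |f (a (j + 1)) - f x| := abs_sub_le _ _ _
      _ ≤ D + D * (j - i + 1) := add_le_add h2 h1
      _ = D * ((j + 1 : ℕ) - i + 1) := by push_cast; ring

lemma sum_abs_sub_le_of_chain {f : ℝ → ℝ} {a : ℕ → ℝ} {M : ℕ} {D : ℝ} (hM : 1 ≤ M)
    (ha : ∀ k < M, a k ≤ a (k + 1))
    (hosc : ∀ k < M, ∀ x ∈ Icc (a k) (a (k + 1)), ∀ y ∈ Icc (a k) (a (k + 1)), |f y - f x| ≤ D)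
    {u : ℕ → ℝ} (hu : Monotone u) (hus : ∀ i, u i ∈ Icc (a 0) (a M)) (n : ℕ) :
    ∑ i ∈ Finset.range n, |f (u (i + 1)) - f (u i)| ≤ D * (n + M) := by
  obtain ⟨g, hg, hgM, hgI⟩ := exists_index_mem_Icc a hM
  have hD : 0 ≤ D := by
    simpa using hosc 0 hM (a 0) (left_mem_Icc.2 (ha 0 hM)) (a 0) (left_mem_Icc.2 (ha 0 hM))
  have hstep : ∀ i, |f (u (i + 1)) - f (u i)| ≤ D * ((g (u (i + 1)) : ℝ) - g (u i)) + D := fun i =>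
    (abs_sub_le_of_chain ha hosc (hg (hu i.le_succ)) (hgM _) (hgI _ (hus i))
      (hgI _ (hus (i + 1)))).trans_eq (by ring)
  have hgap : (g (u n) : ℝ) - g (u 0) ≤ M := by
    have : (g (u n) : ℝ) < M := by exact_mod_cast hgM (u n)
    linarith [(g (u 0)).cast_nonneg (α := ℝ)]
  calc ∑ i ∈ Finset.range n, |f (u (i + 1)) - f (u i)|
      ≤ ∑ i ∈ Finset.range n, (D * ((g (u (i + 1)) : ℝ) - g (u i)) + D) :=
        Finset.sum_le_sum fun i _ => hstep i
    _ = D * ((g (u n) : ℝ) - g (u 0)) + D * n := by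
      rw [Finset.sum_add_distrib, ← Finset.mul_sum, Finset.sum_range_sub (fun i => (g (u i) : ℝ)),
        Finset.sum_const, Finset.card_range, nsmul_eq_mul, mul_comm (n : ℝ)]
    _ ≤ D * (n + M) := by nlinarith

lemma eVariationOn_le_of_adaptErr_le {f : ℝ → ℝ} {C : ℝ} (hf : ContinuousOn f (Icc 0 1))
    (h : ∀ N : ℕ, 1 ≤ N → adaptErr f N ≤ C / N) :
    eVariationOn f (Icc 0 1) ≤ ENNReal.ofReal (2 * C) := by
  have hb : Bornology.IsBounded (f '' Icc 0 1) := (isCompact_Icc.image_of_continuousOn hf).isBounded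
  refine iSup_le fun ⟨n, u, hu, hus⟩ => ?_
  simp_rw [edist_dist, Real.dist_eq]
  rw [← ENNReal.ofReal_sum_of_nonneg fun _ _ => abs_nonneg _]
  have hlim : Tendsto (fun N : ℕ => 2 * (C + 1 / N) * (n / N + 1)) atTop (𝓝 (2 * C)) := by
    simpa using ((tendsto_one_div_atTop_nhds_zero_nat.const_add C).const_mul 2).mul
      ((tendsto_const_div_atTop_nhds_zero_nat (n : ℝ)).add_const 1)
  refine ENNReal.ofReal_le_ofReal (ge_of_tendsto hlim (eventually_atTop.2 ⟨1, fun N hN => ?_⟩))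
  have hNpos : (0 : ℝ) < N := by exact_mod_cast hN
  set B := (C + 1 / N) / N with hBdef
  have hB : adaptErr f N < B := (h N hN).trans_lt
    ((div_lt_div_iff_of_pos_right hNpos).2 (lt_add_of_pos_right C (by positivity)))
  have hB0 : 0 ≤ B := (adaptErr_nonneg f N).trans hB.le
  obtain ⟨M, hM, hMN, a, ha0, haM, ha, hloc⟩ := exists_partition_of_adaptErr_lt hN hB
  have hosc := fun k hk => abs_sub_le_of_locErr_lt
    (hb.subset (image_mono (by simpa only [ha0, haM] using Icc_subset_Icc_of_le_succ ha hk)))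
    (hloc k hk)
  calc ∑ i ∈ Finset.range n, |f (u (i + 1)) - f (u i)|
      ≤ 2 * B * (n + M) :=
        sum_abs_sub_le_of_chain hM ha hosc hu (by simpa only [ha0, haM] using hus) n
    _ ≤ 2 * B * (n + N) := by
      have : (M : ℝ) ≤ N := by exact_mod_cast hMN
      nlinarith
    _ = 2 * (C + 1 / N) * (n / N + 1) := by rw [hBdef]; field_simp

theorem stmt4 (f : ℝ → ℝ) (hf : ContinuousOn f (Set.Icc 0 1)) :
    (BoundedVariationOn f (Set.Icc 0 1) ↔
      ∃ C > (0:ℝ), ∀ N : ℕ, 1 ≤ N → adaptErr f N ≤ C / N) ∧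
    (BoundedVariationOn f (Set.Icc 0 1) →
      ∀ N : ℕ, 1 ≤ N →
        adaptErr f N ≤ ((1 / 2) * (eVariationOn f (Set.Icc 0 1)).toReal) / N) ∧
    (∀ C : ℝ, 0 < C → (∀ N : ℕ, 1 ≤ N → adaptErr f N ≤ C / N) →
      eVariationOn f (Set.Icc 0 1) ≤ ENNReal.ofReal (6 * C)) := by
  have direct := fun hbv (N : ℕ) (hN : 1 ≤ N) => adaptErr_le_of_boundedVariationOn hf hbv hN
  refine ⟨⟨fun hbv => ?_, fun ⟨C, _, h⟩ => ?_⟩, direct, fun C hC h => ?_⟩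
  · refine ⟨(1 / 2) * (eVariationOn f (Icc 0 1)).toReal + 1, by positivity, fun N hN => ?_⟩
    exact (direct hbv N hN).trans (div_le_div_of_nonneg_right (by linarith) (Nat.cast_nonneg N))
  · exact ne_top_of_le_ne_top ENNReal.ofReal_ne_top (eVariationOn_le_of_adaptErr_le hf h)
  · exact (eVariationOn_le_of_adaptErr_le hf h).trans (ENNReal.ofReal_le_ofReal (by linarith))
end

section
/- Let q_x, q_y ∈ ℝ and consider the linear function 𝐪(x,y) = q_x x + q_y y on ℝ². For an axis-aligned rectangle T = I × J, let e_{1,T}(𝐪)_p := inf_{c∈ℝ} ‖𝐪 − c‖_{L^p(T)}. Then for 1 ≤ p < ∞, the infimum over all axis-aligned rectangles T = I × J of unit area (|I|·|J| = 1) of e_{1,T}(𝐪)_p equals C_p √(|q_x q_y|), where C_p = (2/((p+1)(p+2)))^{1/p}; for p = ∞ the infimum equals √(|q_x q_y|). Moreover, when q_x q_y ≠ 0 the infimum is attained exactly by rectangles whose side lengths satisfy |I|/|J| = |q_y|/|q_x|, i.e. |I| = √(|q_y|/|q_x|) and |J| = √(|q_x|/|q_y|), and this optimal aspect ratio is independent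 of p. -/
/-!
Translating `T` to the centred rectangle `[-w/2, w/2] × [-h/2, h/2]` changes `𝐪` only by a
constant; there `𝐪` is odd and the rectangle is symmetric, so the triangle inequality makes `c = 0`
the best constant and `e_{1,T}(𝐪)_p = ‖𝐪‖_{L^p(T)}`. With `A = |q_x| w / 2`, `B = |q_y| h / 2`,
two integrations give `‖𝐪‖_p^p = 2 ((A + B)^{p+2} - |A - B|^{p+2}) / (|q_x q_y| (p+1) (p+2))`,
and `‖𝐪‖_∞ = A + B` is attained at a corner. For `w h = 1` we have
`(A + B)² = |q_x q_y| + (A - B)²`, so strict superadditivity of `t ↦ t^{(p+2)/2}` shows that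
both errors are minimal exactly when `A = B`, with value `C_p √|q_x q_y|`. If `q_x q_y = 0`,
long thin rectangles along a direction in which `𝐪` is constant make the error arbitrarily small.
-/

open Set MeasureTheory ENNReal

/-- The axis-aligned rectangle `[a, a+w] × [b, b+h]`. -/
def rect (a b w h : ℝ) : Set (ℝ × ℝ) := Set.Icc a (a + w) ×ˢ Set.Icc b (b + h)

/-- Best-constant `L^p` approximation error `e_{1,T}(g)_p = inf_c ‖g - c‖_{L^p(T)}`. -/
noncomputable def constErr (p : ℝ≥0∞) (g : ℝ × ℝ → ℝ) (T : Set (ℝ × ℝ)) : ℝ≥0∞ :=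
  ⨅ c : ℝ, eLpNorm (fun z => g z - c) p (volume.restrict T)

/-- The shape function `K_p(𝐪)`: the infimum over all unit-area axis-aligned
rectangles of the best-constant `L^p` error of `𝐪(x,y) = q_x x + q_y y`. -/
noncomputable def shapeK (p : ℝ≥0∞) (qx qy : ℝ) : ℝ≥0∞ :=
  sInf { e : ℝ≥0∞ | ∃ a b w h : ℝ, 0 < w ∧ 0 < h ∧ w * h = 1 ∧
    e = constErr p (fun z => qx * z.1 + qy * z.2) (rect a b w h) }

open Filter Topology Asymptotics

lemma continuous_abs_rpow {r : ℝ} (hr : 0 ≤ r) : Continuous fun t : ℝ => |t| ^ r :=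
  continuous_abs.rpow_const fun _ => Or.inr hr

lemma hasDerivAt_abs_rpow_mul_self {r : ℝ} (hr : 0 < r) (t : ℝ) :
    HasDerivAt (fun s : ℝ => |s| ^ r * s) ((r + 1) * |t| ^ r) t := by
  rcases eq_or_ne t 0 with rfl | ht
  · rw [abs_zero, Real.zero_rpow hr.ne', mul_zero, hasDerivAt_iff_isLittleO_nhds_zero]
    have hlim : Tendsto (fun s : ℝ => |s| ^ r) (𝓝 0) (𝓝 0) := by
      simpa [Real.zero_rpow hr.ne'] using (continuous_abs_rpow hr.le).tendsto 0
    simpa using ((isLittleO_one_iff ℝ).2 hlim).mul_isBigO (isBigO_refl (fun s : ℝ => s) _)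
  · have hpow : |t| ^ (r - 1) * |t| = |t| ^ r := by
      rw [Real.rpow_sub_one (abs_ne_zero.2 ht), div_mul_cancel₀ _ (abs_ne_zero.2 ht)]
    refine (((hasDerivAt_abs ht).rpow_const (p := r) (Or.inl (abs_ne_zero.2 ht))).mul
      (hasDerivAt_id t)).congr_deriv ?_
    rw [id, mul_one, ← hpow, ← self_mul_sign t]
    ring

lemma integral_abs_rpow {r : ℝ} (hr : 0 < r) (u v : ℝ) :
    ∫ t in u..v, |t| ^ r = (|v| ^ r * v - |u| ^ r * u) / (r + 1) := by
  have h := intervalIntegral.integral_eq_sub_of_hasDerivAt (a := u) (b := v)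
    (fun t _ => hasDerivAt_abs_rpow_mul_self hr t)
    (((continuous_abs_rpow hr.le).const_mul (r + 1)).intervalIntegrable _ _)
  rw [intervalIntegral.integral_const_mul] at h
  rw [← h]
  field_simp

lemma integral_abs_rpow_mul_self {r : ℝ} (hr : 0 < r) (u v : ℝ) :
    ∫ t in u..v, |t| ^ r * t = (|v| ^ (r + 2) - |u| ^ (r + 2)) / (r + 2) := by
  have hd (t : ℝ) : HasDerivAt (fun s : ℝ => |s| ^ (r + 2)) ((r + 2) * (|t| ^ r * t)) t := by
    simpa [mul_assoc] using hasDerivAt_abs_rpow t (p := r + 2) (by linarith)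
  have h := intervalIntegral.integral_eq_sub_of_hasDerivAt (a := u) (b := v) (fun t _ => hd t)
    ((((continuous_abs_rpow hr.le).mul continuous_id).const_mul (r + 2)).intervalIntegrable _ _)
  rw [intervalIntegral.integral_const_mul] at h
  rw [← h]
  field_simp

lemma integral_Icc_neg_half_half {f : ℝ → ℝ} {w : ℝ} (hw : 0 ≤ w) :
    ∫ x in Icc (-(w / 2)) (w / 2), f x = ∫ x in -(w / 2)..w / 2, f x := by
  rw [integral_Icc_eq_integral_Ioc, intervalIntegral.integral_of_le (by linarith)]

def centeredRect (w h : ℝ) : Set (ℝ × ℝ) := Icc (-(w / 2)) (w / 2) ×ˢ Icc (-(h / 2)) (h / 2)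

lemma measurableSet_centeredRect (w h : ℝ) : MeasurableSet (centeredRect w h) :=
  measurableSet_Icc.prod measurableSet_Icc

lemma isCompact_centeredRect (w h : ℝ) : IsCompact (centeredRect w h) :=
  isCompact_Icc.prod isCompact_Icc

lemma volume_centeredRect {w h : ℝ} (hw : 0 ≤ w) :
    volume (centeredRect w h) = ENNReal.ofReal (w * h) := by
  rw [centeredRect, Measure.volume_eq_prod, Measure.prod_prod, Real.volume_Icc, Real.volume_Icc,
    ← ENNReal.ofReal_mul (by linarith)]
  ring_nf

lemma neg_preimage_centeredRect (w h : ℝ) : Neg.neg ⁻¹' centeredRect w h = centeredRect w h := by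
  simp [centeredRect, Set.neg_Icc]

lemma add_preimage_rect (a b w h : ℝ) :
    (· + (a + w / 2, b + h / 2)) ⁻¹' rect a b w h = centeredRect w h := by
  ext z
  simp only [rect, centeredRect, mem_preimage, mem_prod, mem_Icc, Prod.fst_add, Prod.snd_add]
  constructor <;> rintro ⟨⟨_, _⟩, _, _⟩ <;> refine ⟨⟨?_, ?_⟩, ?_, ?_⟩ <;> linarith

lemma closure_Ioo_prod_Ioo_eq_centeredRect {w h : ℝ} (hw : 0 < w) (hh : 0 < h) :
    closure (Ioo (-(w / 2)) (w / 2) ×ˢ Ioo (-(h / 2)) (h / 2)) = centeredRect w h := by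
  rw [closure_prod_eq, closure_Ioo (by linarith), closure_Ioo (by linarith), centeredRect]

lemma ae_norm_linear_le_centeredRect (qx qy w h : ℝ) :
    ∀ᵐ z ∂(volume.restrict (centeredRect w h)),
      ‖qx * z.1 + qy * z.2‖ ≤ |qx| * (w / 2) + |qy| * (h / 2) := by
  refine (ae_restrict_iff' (measurableSet_centeredRect w h)).2 (ae_of_all _ fun z hz => ?_)
  calc ‖qx * z.1 + qy * z.2‖ ≤ |qx| * |z.1| + |qy| * |z.2| := by
        simpa only [Real.norm_eq_abs, abs_mul] using abs_add_le (qx * z.1) (qy * z.2)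
    _ ≤ |qx| * (w / 2) + |qy| * (h / 2) := by
        gcongr
        exacts [abs_le.2 hz.1, abs_le.2 hz.2]

section BestConstant

variable {α : Type*} [MeasurableSpace α] {μ : Measure α} {p : ℝ≥0∞}

lemma iInf_eLpNorm_sub_const_add (f : α → ℝ) (k : ℝ) :
    ⨅ c : ℝ, eLpNorm (fun z => f z + k - c) p μ = ⨅ c : ℝ, eLpNorm (fun z => f z - c) p μ := by
  rw [← (Equiv.addRight k).iInf_comp]
  simp only [Equiv.coe_addRight, add_sub_add_right_eq_sub]

lemma iInf_eLpNorm_sub_const_of_odd [Neg α] (hp : 1 ≤ p) {g : α → ℝ}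
    (hμ : MeasurePreserving Neg.neg μ μ) (hg : ∀ z, g (-z) = -g z)
    (hgm : AEStronglyMeasurable g μ) :
    ⨅ c : ℝ, eLpNorm (fun z => g z - c) p μ = eLpNorm g p μ := by
  refine le_antisymm (iInf_le_of_le 0 (by simp)) (le_iInf fun c => ?_)
  set f : α → ℝ := fun z => g z - c
  have hfm : AEStronglyMeasurable f μ := hgm.sub aestronglyMeasurable_const
  have hrefl : eLpNorm (f ∘ Neg.neg) p μ = eLpNorm f p μ := eLpNorm_comp_measurePreserving hfm hμ
  have hsplit : g = (2⁻¹ : ℝ) • (f - f ∘ Neg.neg) := by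
    ext z
    simp only [f, Pi.smul_apply, Pi.sub_apply, Function.comp_apply, hg, smul_eq_mul]
    ring
  calc eLpNorm g p μ = 2⁻¹ * eLpNorm (f - f ∘ Neg.neg) p μ := by
        rw [hsplit, eLpNorm_const_smul, enorm_inv two_ne_zero]
        simp [Real.enorm_eq_ofReal_abs]
    _ ≤ 2⁻¹ * (eLpNorm f p μ + eLpNorm (f ∘ Neg.neg) p μ) := by
        gcongr
        exact eLpNorm_sub_le hfm (hfm.comp_measurePreserving hμ) hp
    _ = eLpNorm f p μ := by
        rw [hrefl, ← two_mul, ← mul_assoc, ENNReal.inv_mul_cancel two_ne_zero ofNat_ne_top,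
          one_mul]

end BestConstant

lemma constErr_rect_eq_eLpNorm {p : ℝ≥0∞} (hp : 1 ≤ p) (qx qy a b w h : ℝ) :
    constErr p (fun z => qx * z.1 + qy * z.2) (rect a b w h) =
      eLpNorm (fun z : ℝ × ℝ => qx * z.1 + qy * z.2) p (volume.restrict (centeredRect w h)) := by
  set v : ℝ × ℝ := (a + w / 2, b + h / 2)
  have hcont : Continuous fun z : ℝ × ℝ => qx * z.1 + qy * z.2 := by fun_prop
  have htrans : MeasurePreserving (· + v) (volume.restrict (centeredRect w h))
      (volume.restrict (rect a b w h)) := by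
    have := (measurePreserving_add_right volume v).restrict_preimage
      (s := rect a b w h) (measurableSet_Icc.prod measurableSet_Icc)
    rwa [add_preimage_rect] at this
  have hneg : MeasurePreserving Neg.neg (volume.restrict (centeredRect w h))
      (volume.restrict (centeredRect w h)) := by
    simpa only [neg_preimage_centeredRect] using
      (Measure.measurePreserving_neg volume).restrict_preimage (measurableSet_centeredRect w h)
  calc constErr p (fun z => qx * z.1 + qy * z.2) (rect a b w h)
      = ⨅ c : ℝ, eLpNorm (fun z : ℝ × ℝ => qx * z.1 + qy * z.2 + (qx * v.1 + qy * v.2) - c) p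
          (volume.restrict (centeredRect w h)) := by
        refine iInf_congr fun c => ?_
        rw [← eLpNorm_comp_measurePreserving (g := fun z => qx * z.1 + qy * z.2 - c)
          (hcont.sub continuous_const).aestronglyMeasurable htrans]
        congr 1
        ext z
        simp only [Function.comp_apply, Prod.fst_add, Prod.snd_add]
        ring
    _ = _ := by
        rw [iInf_eLpNorm_sub_const_add, iInf_eLpNorm_sub_const_of_odd hp hneg
          (fun z => by simp only [Prod.fst_neg, Prod.snd_neg]; ring) hcont.aestronglyMeasurable]

lemma integral_abs_linear_rpow_centeredRect {r qx qy w h : ℝ} (hr : 0 < r) (hqx : qx ≠ 0)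
    (hqy : qy ≠ 0) (hw : 0 ≤ w) (hh : 0 ≤ h) :
    ∫ z in centeredRect w h, |qx * z.1 + qy * z.2| ^ r =
      2 * (|qx * (w / 2) + qy * (h / 2)| ^ (r + 2) - |qx * (w / 2) - qy * (h / 2)| ^ (r + 2)) /
        (qx * qy * ((r + 1) * (r + 2))) := by
  have hint : IntegrableOn (fun z : ℝ × ℝ => |qx * z.1 + qy * z.2| ^ r) (centeredRect w h) :=
    ((continuous_abs_rpow hr.le).comp (by fun_prop)).continuousOn.integrableOn_compact
      (isCompact_centeredRect w h)
  set φ : ℝ → ℝ := fun t => |t| ^ r * t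
  have hφ : Continuous φ := (continuous_abs_rpow hr.le).mul continuous_id
  have hinner (x : ℝ) : ∫ y in Icc (-(h / 2)) (h / 2), |qx * x + qy * y| ^ r =
      qy⁻¹ * ((φ (qx * x + qy * (h / 2)) - φ (qx * x + qy * -(h / 2))) / (r + 1)) := by
    rw [integral_Icc_neg_half_half hh,
      intervalIntegral.integral_comp_add_mul (fun t => |t| ^ r) hqy, integral_abs_rpow hr,
      smul_eq_mul]
  have houter (B : ℝ) : ∫ x in -(w / 2)..w / 2, φ (qx * x + B) =
      qx⁻¹ * ((|qx * (w / 2) + B| ^ (r + 2) - |qx * -(w / 2) + B| ^ (r + 2)) / (r + 2)) := by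
    rw [intervalIntegral.integral_comp_mul_add φ hqx, integral_abs_rpow_mul_self hr, smul_eq_mul]
  have hii (B : ℝ) : IntervalIntegrable (fun x => φ (qx * x + B)) volume (-(w / 2)) (w / 2) :=
    (hφ.comp (by fun_prop)).intervalIntegrable _ _
  rw [centeredRect, Measure.volume_eq_prod, ← Measure.prod_restrict,
    integral_prod _ (by rwa [Measure.prod_restrict, ← Measure.volume_eq_prod]),
    integral_congr_ae (ae_of_all _ hinner), integral_Icc_neg_half_half hw,
    intervalIntegral.integral_const_mul, intervalIntegral.integral_div,
    intervalIntegral.integral_sub (hii _) (hii _), houter, houter]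
  have hneg₁ : |qx * -(w / 2) + qy * -(h / 2)| = |qx * (w / 2) + qy * (h / 2)| := by
    rw [← abs_neg]; ring_nf
  have hneg₂ : |qx * -(w / 2) + qy * (h / 2)| = |qx * (w / 2) - qy * (h / 2)| := by
    rw [← abs_neg]; ring_nf
  rw [hneg₁, hneg₂]
  field_simp
  ring_nf

lemma abs_add_eq_and_abs_sub_eq_of_mul_nonneg {A B : ℝ} (h : 0 ≤ A * B) :
    |A + B| = |A| + |B| ∧ |A - B| = |(|A| - |B|)| := by
  have hAB : |A| * |B| = A * B := by rw [← abs_mul, abs_of_nonneg h]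
  rw [← abs_of_nonneg (add_nonneg (abs_nonneg A) (abs_nonneg B)), ← sq_eq_sq_iff_abs_eq_abs,
    ← sq_eq_sq_iff_abs_eq_abs]
  exact ⟨by linear_combination -(sq_abs A) - sq_abs B - 2 * hAB,
    by linear_combination -(sq_abs A) - sq_abs B + 2 * hAB⟩

lemma abs_add_eq_and_abs_sub_eq_of_mul_nonpos {A B : ℝ} (h : A * B ≤ 0) :
    |A + B| = |(|A| - |B|)| ∧ |A - B| = |A| + |B| := by
  have := abs_add_eq_and_abs_sub_eq_of_mul_nonneg (A := A) (B := -B) (by linarith [mul_neg A B])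
  rwa [abs_neg, ← sub_eq_add_neg, sub_neg_eq_add, and_comm] at this

lemma max_abs_add_abs_sub (A B : ℝ) : max |A + B| |A - B| = |A| + |B| := by
  have hle : |(|A| - |B|)| ≤ |A| + |B| :=
    abs_le.2 ⟨by linarith [abs_nonneg A, abs_nonneg B], by linarith [abs_nonneg A, abs_nonneg B]⟩
  rcases le_total 0 (A * B) with h | h
  · obtain ⟨h₁, h₂⟩ := abs_add_eq_and_abs_sub_eq_of_mul_nonneg h
    rw [h₁, h₂, max_eq_left hle]
  · obtain ⟨h₁, h₂⟩ := abs_add_eq_and_abs_sub_eq_of_mul_nonpos h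
    rw [h₁, h₂, max_eq_right hle]

lemma abs_add_rpow_sub_abs_sub_rpow_div_mul {x y u v : ℝ} (hu : 0 ≤ u) (hv : 0 ≤ v) (s : ℝ) :
    (|x * u + y * v| ^ s - |x * u - y * v| ^ s) / (x * y) =
      ((|x| * u + |y| * v) ^ s - |(|x| * u - |y| * v)| ^ s) / |x * y| := by
  have hx : |x * u| = |x| * u := by rw [abs_mul, abs_of_nonneg hu]
  have hy : |y * v| = |y| * v := by rw [abs_mul, abs_of_nonneg hv]
  have hprod : (x * u) * (y * v) = (x * y) * (u * v) := by ring
  rcases le_total 0 (x * y) with h | h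
  · obtain ⟨h₁, h₂⟩ := abs_add_eq_and_abs_sub_eq_of_mul_nonneg
      (hprod ▸ mul_nonneg h (mul_nonneg hu hv))
    rw [h₁, h₂, hx, hy, abs_of_nonneg h]
  · obtain ⟨h₁, h₂⟩ := abs_add_eq_and_abs_sub_eq_of_mul_nonpos
      (hprod ▸ mul_nonpos_of_nonpos_of_nonneg h (mul_nonneg hu hv))
    rw [h₁, h₂, hx, hy, abs_of_nonpos h, div_neg, ← neg_div, neg_sub]

lemma eLpNorm_linear_centeredRect {p : ℝ≥0∞} (hp0 : p ≠ 0) (hp : p ≠ ⊤) {qx qy w h : ℝ}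
    (hqx : qx ≠ 0) (hqy : qy ≠ 0) (hw : 0 ≤ w) (hh : 0 ≤ h) :
    eLpNorm (fun z : ℝ × ℝ => qx * z.1 + qy * z.2) p (volume.restrict (centeredRect w h)) =
      ENNReal.ofReal ((2 * ((|qx| * (w / 2) + |qy| * (h / 2)) ^ (p.toReal + 2)
          - |(|qx| * (w / 2) - |qy| * (h / 2))| ^ (p.toReal + 2)) /
        (|qx * qy| * ((p.toReal + 1) * (p.toReal + 2)))) ^ (1 / p.toReal)) := by
  have hr : 0 < p.toReal := ENNReal.toReal_pos hp0 hp
  have : IsFiniteMeasure (volume.restrict (centeredRect w h)) :=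
    isFiniteMeasure_restrict.2 (isCompact_centeredRect w h).measure_lt_top.ne
  have hmem : MemLp (fun z : ℝ × ℝ => qx * z.1 + qy * z.2) p (volume.restrict (centeredRect w h)) :=
    MemLp.of_bound (by fun_prop) _ (ae_norm_linear_le_centeredRect qx qy w h)
  rw [hmem.eLpNorm_eq_integral_rpow_norm hp0 hp]
  simp only [Real.norm_eq_abs]
  rw [integral_abs_linear_rpow_centeredRect hr hqx hqy hw hh, mul_div_assoc, ← div_div,
    abs_add_rpow_sub_abs_sub_rpow_div_mul (by linarith) (by linarith), one_div]
  congr 2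
  field_simp

lemma enorm_le_eLpNormEssSup_restrict_of_mem_closure {X E : Type*} [TopologicalSpace X]
    [MeasurableSpace X] [OpensMeasurableSpace X] {μ : Measure X} [μ.IsOpenPosMeasure]
    [TopologicalSpace E] [ContinuousENorm E] {f : X → E} (hf : Continuous f)
    {U : Set X} (hU : IsOpen U) {z : X} (hz : z ∈ closure U) :
    ‖f z‖ₑ ≤ eLpNormEssSup f (μ.restrict U) := by
  show z ∈ {x | ‖f x‖ₑ ≤ eLpNormEssSup f (μ.restrict U)}
  refine closure_minimal (fun y hy => ?_) (isClosed_le hf.enorm continuous_const) hz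
  show ‖f y‖ₑ ≤ _
  by_contra! hlt
  have hV : IsOpen {x | eLpNormEssSup f (μ.restrict U) < ‖f x‖ₑ} :=
    isOpen_lt continuous_const hf.enorm
  have hnull := meas_eLpNormEssSup_lt (f := f) (μ := μ.restrict U)
  rw [Measure.restrict_apply hV.measurableSet] at hnull
  exact ((hV.inter hU).measure_pos μ ⟨y, hlt, hy⟩).ne' hnull

lemma eLpNorm_top_linear_centeredRect {qx qy w h : ℝ} (hw : 0 < w) (hh : 0 < h) :
    eLpNorm (fun z : ℝ × ℝ => qx * z.1 + qy * z.2) ⊤ (volume.restrict (centeredRect w h)) =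
      ENNReal.ofReal (|qx| * (w / 2) + |qy| * (h / 2)) := by
  set U := Ioo (-(w / 2)) (w / 2) ×ˢ Ioo (-(h / 2)) (h / 2)
  set q : ℝ × ℝ → ℝ := fun z => qx * z.1 + qy * z.2
  have hcont : Continuous q := by fun_prop
  have hcorner (y : ℝ) (hy : y ∈ Icc (-(h / 2)) (h / 2)) :
      ENNReal.ofReal |qx * (w / 2) + qy * y| ≤
        eLpNormEssSup q (volume.restrict (centeredRect w h)) := by
    rw [← Real.enorm_eq_ofReal_abs]
    have hUsub : U ⊆ centeredRect w h := prod_mono Ioo_subset_Icc_self Ioo_subset_Icc_self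
    refine (enorm_le_eLpNormEssSup_restrict_of_mem_closure (μ := volume) hcont
      (isOpen_Ioo.prod isOpen_Ioo) (z := (w / 2, y)) ?_).trans
      (eLpNormEssSup_mono_measure _ (Measure.restrict_mono hUsub le_rfl).absolutelyContinuous)
    rw [closure_Ioo_prod_Ioo_eq_centeredRect hw hh]
    exact ⟨⟨by linarith, le_rfl⟩, hy⟩
  rw [eLpNorm_exponent_top]
  refine le_antisymm (eLpNormEssSup_le_of_ae_bound (ae_norm_linear_le_centeredRect qx qy w h)) ?_
  have hmax := max_abs_add_abs_sub (qx * (w / 2)) (qy * (h / 2))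
  rw [abs_mul, abs_mul, abs_of_pos (half_pos hw), abs_of_pos (half_pos hh)] at hmax
  rw [← hmax, ENNReal.ofReal_max]
  exact max_le (hcorner _ ⟨by linarith, le_rfl⟩) (by
    simpa [sub_eq_add_neg] using hcorner (-(h / 2)) ⟨le_rfl, by linarith⟩)

lemma eLpNorm_linear_centeredRect_le (p : ℝ≥0∞) (qx qy : ℝ) {w h : ℝ} (hw : 0 ≤ w)
    (hwh : w * h = 1) :
    eLpNorm (fun z : ℝ × ℝ => qx * z.1 + qy * z.2) p (volume.restrict (centeredRect w h)) ≤
      ENNReal.ofReal (|qx| * (w / 2) + |qy| * (h / 2)) := by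
  refine (eLpNorm_le_of_ae_bound (ae_norm_linear_le_centeredRect qx qy w h)).trans_eq ?_
  rw [Measure.restrict_apply_univ, volume_centeredRect hw, hwh, ENNReal.ofReal_one,
    ENNReal.one_rpow, one_mul]

lemma rpow_add_rpow_lt_rpow_add {x y σ : ℝ} (hx : 0 < x) (hy : 0 < y) (hσ : 1 < σ) :
    x ^ σ + y ^ σ < (x + y) ^ σ := by
  have hpeel {t : ℝ} (ht : 0 < t) : t ^ σ = t * t ^ (σ - 1) := by
    rw [Real.rpow_sub_one ht.ne', mul_div_cancel₀ _ ht.ne']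
  have hx' := Real.rpow_lt_rpow hx.le (lt_add_of_pos_right x hy) (sub_pos.2 hσ)
  have hy' := Real.rpow_lt_rpow hy.le (lt_add_of_pos_left y hx) (sub_pos.2 hσ)
  rw [hpeel hx, hpeel hy, hpeel (add_pos hx hy)]
  nlinarith

lemma rpow_eq_sq_rpow_half {S : ℝ} (hS : 0 ≤ S) (s : ℝ) : S ^ s = (S ^ 2) ^ (s / 2) := by
  rw [← Real.rpow_natCast, ← Real.rpow_mul hS]
  ring_nf

lemma rpow_mul_sqrt_eq {r m : ℝ} (hr : 0 < r) (hm : 0 < m) :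
    (2 / ((r + 1) * (r + 2))) ^ (1 / r) * √m =
      (2 * m ^ ((r + 2) / 2) / (m * ((r + 1) * (r + 2)))) ^ (1 / r) := by
  have hsplit : m ^ ((r + 2) / 2) = m * m ^ (r / 2) := by
    rw [show (r + 2) / 2 = 1 + r / 2 by ring, Real.rpow_add hm, Real.rpow_one]
  rw [hsplit, show 2 * (m * m ^ (r / 2)) / (m * ((r + 1) * (r + 2))) =
      2 / ((r + 1) * (r + 2)) * m ^ (r / 2) by field_simp,
    Real.mul_rpow (by positivity) (by positivity), ← Real.rpow_mul hm.le,
    show r / 2 * (1 / r) = 1 / 2 by field_simp, Real.sqrt_eq_rpow]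

lemma rpow_mul_sqrt_lt {r m S D : ℝ} (hr : 0 < r) (hm : 0 < m) (hS : 0 ≤ S) (hD : 0 < D)
    (hSD : S ^ 2 = m + D ^ 2) :
    (2 / ((r + 1) * (r + 2))) ^ (1 / r) * √m <
      (2 * (S ^ (r + 2) - D ^ (r + 2)) / (m * ((r + 1) * (r + 2)))) ^ (1 / r) := by
  have hsuper : m ^ ((r + 2) / 2) < S ^ (r + 2) - D ^ (r + 2) := by
    rw [rpow_eq_sq_rpow_half hS, rpow_eq_sq_rpow_half hD.le, hSD]
    linarith [rpow_add_rpow_lt_rpow_add hm (pow_pos hD 2) (by linarith : 1 < (r + 2) / 2)]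
  rw [rpow_mul_sqrt_eq hr hm]
  gcongr

-- `C_p`; for `p = ⊤` the junk values `⊤.toReal = 0` and `1 / 0 = 0` give `C_⊤ = 1`.
noncomputable def errConst (p : ℝ≥0∞) : ℝ :=
  (2 / ((p.toReal + 1) * (p.toReal + 2))) ^ (1 / p.toReal)

lemma errConst_top : errConst ⊤ = 1 := by
  simp [errConst]

section LinearFunction

variable {p : ℝ≥0∞} {qx qy a b w h : ℝ}

lemma sq_add_eq_abs_mul_add_sq_abs_sub (hwh : w * h = 1) :
    (|qx| * (w / 2) + |qy| * (h / 2)) ^ 2 =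
      |qx * qy| + |(|qx| * (w / 2) - |qy| * (h / 2))| ^ 2 := by
  rw [sq_abs, abs_mul]
  linear_combination (|qx| * |qy|) * hwh

lemma constErr_rect_of_balanced (hp : 1 ≤ p) (hqx : qx ≠ 0) (hqy : qy ≠ 0) (hw : 0 < w)
    (hh : 0 < h) (hwh : w * h = 1) (hbal : |qx| * w = |qy| * h) :
    constErr p (fun z => qx * z.1 + qy * z.2) (rect a b w h) =
      ENNReal.ofReal (errConst p * √|qx * qy|) := by
  have hD : |qx| * (w / 2) - |qy| * (h / 2) = 0 := by linarith
  have hS : (|qx| * (w / 2) + |qy| * (h / 2)) ^ 2 = |qx * qy| := by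
    simpa [hD] using sq_add_eq_abs_mul_add_sq_abs_sub (qx := qx) (qy := qy) hwh
  have hS0 : 0 ≤ |qx| * (w / 2) + |qy| * (h / 2) := by positivity
  rw [constErr_rect_eq_eLpNorm hp]
  rcases eq_or_ne p ⊤ with rfl | hpt
  · rw [eLpNorm_top_linear_centeredRect hw hh, errConst_top, one_mul, ← hS, Real.sqrt_sq hS0]
  · have hr : 0 < p.toReal := ENNReal.toReal_pos (by positivity) hpt
    rw [eLpNorm_linear_centeredRect (by positivity) hpt hqx hqy hw.le hh.le, hD, abs_zero,
      Real.zero_rpow (by positivity), sub_zero, errConst,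
      rpow_mul_sqrt_eq hr (by positivity), rpow_eq_sq_rpow_half hS0, hS]

lemma errConst_mul_sqrt_lt_constErr_rect (hp : 1 ≤ p) (hqx : qx ≠ 0) (hqy : qy ≠ 0) (hw : 0 < w)
    (hh : 0 < h) (hwh : w * h = 1) (hbal : |qx| * w ≠ |qy| * h) :
    ENNReal.ofReal (errConst p * √|qx * qy|) <
      constErr p (fun z => qx * z.1 + qy * z.2) (rect a b w h) := by
  have hD : 0 < |(|qx| * (w / 2) - |qy| * (h / 2))| :=
    abs_pos.2 fun h0 => hbal (by linarith)
  have hS := sq_add_eq_abs_mul_add_sq_abs_sub (qx := qx) (qy := qy) hwh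
  have hS0 : 0 ≤ |qx| * (w / 2) + |qy| * (h / 2) := by positivity
  have hm : 0 < |qx * qy| := abs_pos.2 (mul_ne_zero hqx hqy)
  rw [constErr_rect_eq_eLpNorm hp]
  rcases eq_or_ne p ⊤ with rfl | hpt
  · rw [eLpNorm_top_linear_centeredRect hw hh, errConst_top, one_mul,
      ENNReal.ofReal_lt_ofReal_iff_of_nonneg (Real.sqrt_nonneg _), ← Real.sqrt_sq hS0]
    exact Real.sqrt_lt_sqrt hm.le (by rw [hS]; linarith [pow_pos hD 2])
  · have hr : 0 < p.toReal := ENNReal.toReal_pos (by positivity) hpt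
    rw [eLpNorm_linear_centeredRect (by positivity) hpt hqx hqy hw.le hh.le,
      ENNReal.ofReal_lt_ofReal_iff_of_nonneg (by unfold errConst; positivity)]
    exact rpow_mul_sqrt_lt hr hm hS0 hD hS

lemma ofReal_errConst_mul_sqrt_le_constErr_rect (hp : 1 ≤ p) (hqx : qx ≠ 0) (hqy : qy ≠ 0)
    (hw : 0 < w) (hh : 0 < h) (hwh : w * h = 1) :
    ENNReal.ofReal (errConst p * √|qx * qy|) ≤
      constErr p (fun z => qx * z.1 + qy * z.2) (rect a b w h) := by
  by_cases hbal : |qx| * w = |qy| * h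
  · exact (constErr_rect_of_balanced hp hqx hqy hw hh hwh hbal).ge
  · exact (errConst_mul_sqrt_lt_constErr_rect hp hqx hqy hw hh hwh hbal).le

lemma constErr_rect_eq_iff (hp : 1 ≤ p) (hqx : qx ≠ 0) (hqy : qy ≠ 0) (hw : 0 < w) (hh : 0 < h)
    (hwh : w * h = 1) :
    constErr p (fun z => qx * z.1 + qy * z.2) (rect a b w h) =
        ENNReal.ofReal (errConst p * √|qx * qy|) ↔ |qx| * w = |qy| * h := by
  refine ⟨fun heq => ?_, constErr_rect_of_balanced hp hqx hqy hw hh hwh⟩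
  by_contra hbal
  exact (errConst_mul_sqrt_lt_constErr_rect hp hqx hqy hw hh hwh hbal).ne' heq

lemma exists_balanced {x y : ℝ} (hx : 0 < x) (hy : 0 < y) :
    ∃ w h : ℝ, 0 < w ∧ 0 < h ∧ w * h = 1 ∧ x * w = y * h := by
  refine ⟨√y / √x, √x / √y, by positivity, by positivity, by field_simp, ?_⟩
  field_simp
  rw [Real.sq_sqrt hx.le, Real.sq_sqrt hy.le, mul_comm]

lemma shapeK_of_mul_ne_zero (hp : 1 ≤ p) (hq : qx * qy ≠ 0) :
    shapeK p qx qy = ENNReal.ofReal (errConst p * √|qx * qy|) := by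
  have hqx := left_ne_zero_of_mul hq
  have hqy := right_ne_zero_of_mul hq
  obtain ⟨w, h, hw, hh, hwh, hbal⟩ := exists_balanced (abs_pos.2 hqx) (abs_pos.2 hqy)
  refine IsGLB.sInf_eq (IsLeast.isGLB ⟨⟨0, 0, w, h, hw, hh, hwh,
    (constErr_rect_of_balanced hp hqx hqy hw hh hwh hbal).symm⟩, ?_⟩)
  rintro _ ⟨a, b, w, h, hw, hh, hwh, rfl⟩
  exact ofReal_errConst_mul_sqrt_le_constErr_rect hp hqx hqy hw hh hwh

lemma shapeK_le (hp : 1 ≤ p) (hw : 0 < w) (hh : 0 < h) (hwh : w * h = 1) :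
    shapeK p qx qy ≤ ENNReal.ofReal (|qx| * (w / 2) + |qy| * (h / 2)) :=
  sInf_le_of_le ⟨0, 0, w, h, hw, hh, hwh, rfl⟩
    ((constErr_rect_eq_eLpNorm hp qx qy 0 0 w h).trans_le
      (eLpNorm_linear_centeredRect_le p qx qy hw.le hwh))

lemma shapeK_of_mul_eq_zero (hp : 1 ≤ p) (hq : qx * qy = 0) : shapeK p qx qy = 0 := by
  have hbound (t : ℝ) (ht : 0 < t) :
      shapeK p qx qy ≤ ENNReal.ofReal ((|qx| + |qy|) / 2 * t⁻¹) := by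
    rcases mul_eq_zero.1 hq with h0 | h0
    · refine (shapeK_le hp ht (inv_pos.2 ht) (mul_inv_cancel₀ ht.ne')).trans_eq ?_
      rw [h0, abs_zero]
      ring_nf
    · refine (shapeK_le hp (inv_pos.2 ht) ht (inv_mul_cancel₀ ht.ne')).trans_eq ?_
      rw [h0, abs_zero]
      ring_nf
  have hlim : Tendsto (fun t : ℝ => ENNReal.ofReal ((|qx| + |qy|) / 2 * t⁻¹)) atTop (𝓝 0) := by
    simpa using ENNReal.tendsto_ofReal (tendsto_inv_atTop_zero.const_mul ((|qx| + |qy|) / 2))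
  exact le_antisymm (ge_of_tendsto hlim ((eventually_gt_atTop 0).mono hbound)) zero_le

end LinearFunction

/-- For the linear function `𝐪(x,y) = q_x x + q_y y`, the infimum over unit-area
axis-aligned rectangles of `e_{1,T}(𝐪)_p` equals `C_p √|q_x q_y|` with
`C_p = (2/((p+1)(p+2)))^{1/p}` (`C_∞ = 1`); if `q_x q_y ≠ 0` the infimum is attained
exactly on rectangles with aspect ratio `|I|/|J| = |q_y|/|q_x|`, independently of `p`. -/
theorem stmt13 (qx qy : ℝ) :
    (∀ p : ℝ≥0∞, 1 ≤ p →
      shapeK p qx qy = ENNReal.ofReal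
        ((2 / ((p.toReal + 1) * (p.toReal + 2))) ^ (1 / p.toReal) * Real.sqrt |qx * qy|)) ∧
    shapeK ⊤ qx qy = ENNReal.ofReal (Real.sqrt |qx * qy|) ∧
    (qx * qy ≠ 0 → ∀ p : ℝ≥0∞, 1 ≤ p → ∀ a b w h : ℝ, 0 < w → 0 < h → w * h = 1 →
      (constErr p (fun z => qx * z.1 + qy * z.2) (rect a b w h) =
          ENNReal.ofReal ((2 / ((p.toReal + 1) * (p.toReal + 2))) ^ (1 / p.toReal) *
            Real.sqrt |qx * qy|) ↔
        w / h = |qy| / |qx|)) := by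
  have hshape (p : ℝ≥0∞) (hp : 1 ≤ p) :
      shapeK p qx qy = ENNReal.ofReal (errConst p * √|qx * qy|) := by
    rcases eq_or_ne (qx * qy) 0 with hq | hq
    · rw [shapeK_of_mul_eq_zero hp hq, hq, abs_zero, Real.sqrt_zero, mul_zero, ENNReal.ofReal_zero]
    · exact shapeK_of_mul_ne_zero hp hq
  refine ⟨hshape, by simpa [errConst_top] using hshape ⊤ le_top,
    fun hq p hp a b w h hw hh hwh => ?_⟩
  have hqx := left_ne_zero_of_mul hq
  rw [div_eq_div_iff hh.ne' (abs_pos.2 hqx).ne', mul_comm w]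
  exact constErr_rect_eq_iff hp hqx (right_ne_zero_of_mul hq) hw hh hwh
end
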